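/- arXiv:2505.23600 — 4 statements merged into one kernel-verified Lean document; each statement's English description precedes it below -/
import Mathlib

section
/- Let 1 < p < ∞. Assume (A1) holds and that for every R > 0 there exists a one-dimensional large solution on (−R,R). For each ℓ > 0 let u_ℓ be a nonnegative large solution of div(|∇u|^{p−2}∇u) = f(u) on S_ℓ, and assume u_{ℓ₂} ≤ u_{ℓ₁} on S_{ℓ₁} whenever 0 < ℓ₁ ≤ ℓ₂. Then the pointwise limit u(x) := lim_{ℓ→∞} u_ℓ(x) exists for every x ∈ S, u is bounded on every compact subset of S, and for every compact K ⊂ S and every 1 ≤ q < ∞ one has ∫_K |u_ℓ − u|^q dx → 0 as ℓ → ∞. -/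
open MeasureTheory Metric Set Filter
open scoped Topology ENNReal Pointwise

noncomputable section

/-- `u` is a `C¹` weak solution of `div(|∇u|^{p-2}∇u) = f(u)` in the open set `Ω`:
`∫_Ω ‖∇u‖^{p-2}⟨∇u,∇ψ⟩ = -∫_Ω f(u)ψ` for all smooth compactly supported `ψ` with
support in `Ω`.  (Since `p - 2` may be negative, `‖∇u‖^(p-2)` is real `rpow`, whose
convention `0 ^ (negative) = 0` encodes "`‖∇u‖^{p-2}∇u` is `0` where `∇u = 0`".) -/
def IsWeakSolution (p : ℝ) {E : Type*} [NormedAddCommGroup E] [InnerProductSpace ℝ E]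
    [CompleteSpace E] [MeasureSpace E] (f : ℝ → ℝ) (Ω : Set E) (u : E → ℝ) : Prop :=
  ContDiffOn ℝ 1 u Ω ∧
  ∀ ψ : E → ℝ, ContDiff ℝ (⊤ : ℕ∞) ψ → HasCompactSupport ψ → tsupport ψ ⊆ Ω →
    (∫ x in Ω, ‖gradient u x‖ ^ (p - 2) * (inner ℝ (gradient u x) (gradient ψ x) : ℝ))
      = -∫ x in Ω, f (u x) * ψ x

/-- `u` is a `C¹` weak subsolution of `div(|∇u|^{p-2}∇u) = f(u)` in `Ω`. -/
def IsWeakSubsolution (p : ℝ) {E : Type*} [NormedAddCommGroup E] [InnerProductSpace ℝ E]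
    [CompleteSpace E] [MeasureSpace E] (f : ℝ → ℝ) (Ω : Set E) (u : E → ℝ) : Prop :=
  ContDiffOn ℝ 1 u Ω ∧
  ∀ ψ : E → ℝ, ContDiff ℝ (⊤ : ℕ∞) ψ → HasCompactSupport ψ → tsupport ψ ⊆ Ω → (∀ x, 0 ≤ ψ x) →
    (∫ x in Ω, ‖gradient u x‖ ^ (p - 2) * (inner ℝ (gradient u x) (gradient ψ x) : ℝ))
      ≤ -∫ x in Ω, f (u x) * ψ x

/-- A large (boundary blow-up) solution on `Ω`. -/
def IsLargeSolution (p : ℝ) {E : Type*} [NormedAddCommGroup E] [InnerProductSpace ℝ E]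
    [CompleteSpace E] [MeasureSpace E] (f : ℝ → ℝ) (Ω : Set E) (u : E → ℝ) : Prop :=
  IsWeakSolution p f Ω u ∧
  ∀ M : ℝ, 0 < M → ∃ δ > 0, ∀ x ∈ Ω, infDist x (frontier Ω) < δ → M ≤ u x

/-- A one-dimensional large solution on `(-R, R)`: even, nondecreasing on `[0,R)`,
`(|φ'|^{p-2}φ')' = f(φ)` on `(-R,R)`, and `φ(t) → ∞` as `t → ±R`. -/
def IsOneDimLargeSolution (p : ℝ) (f : ℝ → ℝ) (R : ℝ) (φ : ℝ → ℝ) : Prop :=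
  ContDiffOn ℝ 1 φ (Ioo (-R) R) ∧
  (∀ t : ℝ, φ (-t) = φ t) ∧
  MonotoneOn φ (Ico 0 R) ∧
  (∀ t ∈ Ioo (-R) R,
    HasDerivAt (fun s : ℝ => |deriv φ s| ^ (p - 2) * deriv φ s) (f (φ t)) t) ∧
  Tendsto φ (nhdsWithin R (Iio R)) atTop ∧
  Tendsto φ (nhdsWithin (-R) (Ioi (-R))) atTop

/-- The Keller–Osserman condition (A1): with `F(t) = ∫₀^t f`, the integral
`∫_r^∞ F(s)^{-1/p} ds` is finite for every `r > 0`. -/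
def KellerOsserman (p : ℝ) (f : ℝ → ℝ) : Prop :=
  ∀ r : ℝ, 0 < r →
    IntegrableOn (fun s : ℝ => (∫ τ in (0:ℝ)..s, f τ) ^ (-(1:ℝ) / p)) (Ioi r) volume

/-- The second component `X₂` of a point of `ℝ^m × ℝ^k`. -/
def proj2 {m k : ℕ} (x : EuclideanSpace ℝ (Fin m ⊕ Fin k)) : EuclideanSpace ℝ (Fin k) :=
  WithLp.toLp 2 (fun j => x (Sum.inr j))

/-- The point `(X₁, X₂)` of `ℝ^m × ℝ^k`. -/
def prodMk {m k : ℕ} (X₁ : EuclideanSpace ℝ (Fin m)) (X₂ : EuclideanSpace ℝ (Fin k)) :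
    EuclideanSpace ℝ (Fin m ⊕ Fin k) :=
  WithLp.toLp 2 (Sum.elim (fun i => X₁ i) (fun j => X₂ j))

/-- The finite cylinder `S_ℓ = (ℓ·ω₁) × ω₂`. -/
def cylF (m k : ℕ) (ω₁ : Set (EuclideanSpace ℝ (Fin m))) (ω₂ : Set (EuclideanSpace ℝ (Fin k)))
    (ℓ : ℝ) : Set (EuclideanSpace ℝ (Fin m ⊕ Fin k)) :=
  {x | WithLp.toLp 2 (fun i => x (Sum.inl i)) ∈ ℓ • ω₁ ∧ WithLp.toLp 2 (fun j => x (Sum.inr j)) ∈ ω₂}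

/-- The infinite cylinder `S = ℝ^m × ω₂`. -/
def cylS (m k : ℕ) (ω₂ : Set (EuclideanSpace ℝ (Fin k))) :
    Set (EuclideanSpace ℝ (Fin m ⊕ Fin k)) :=
  {x | WithLp.toLp 2 (fun j => x (Sum.inr j)) ∈ ω₂}

end


/-- Auxiliary: first-component projection. -/
noncomputable def proj1Aux (m k : ℕ) (x : EuclideanSpace ℝ (Fin m ⊕ Fin k)) :
    EuclideanSpace ℝ (Fin m) :=
  WithLp.toLp 2 (fun i => x (Sum.inl i))

lemma proj1Aux_norm_le (m k : ℕ) (x : EuclideanSpace ℝ (Fin m ⊕ Fin k)) :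
    ‖proj1Aux m k x‖ ≤ ‖x‖ := by
  rw [EuclideanSpace.norm_eq, EuclideanSpace.norm_eq]
  apply Real.sqrt_le_sqrt
  rw [Fintype.sum_sum_type]
  have h2 : (0:ℝ) ≤ ∑ j : Fin k, ‖x (Sum.inr j)‖ ^ 2 := by positivity
  have h1 : (∑ i : Fin m, ‖proj1Aux m k x i‖ ^ 2) = ∑ i : Fin m, ‖x (Sum.inl i)‖ ^ 2 := rfl
  linarith

lemma mem_smul_of_ball {m : ℕ} {ω₁ : Set (EuclideanSpace ℝ (Fin m))} {ε : ℝ} (hε : 0 < ε)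
    (hball : Metric.ball 0 ε ⊆ ω₁) (y : EuclideanSpace ℝ (Fin m)) (ℓ : ℝ)
    (hℓ : ‖y‖ / ε + 1 ≤ ℓ) : y ∈ ℓ • ω₁ := by
  have hℓpos : 0 < ℓ := lt_of_lt_of_le (by positivity) hℓ
  rw [Set.mem_smul_set_iff_inv_smul_mem₀ hℓpos.ne']
  apply hball
  rw [mem_ball_zero_iff, norm_smul, norm_inv, Real.norm_eq_abs, abs_of_pos hℓpos,
    inv_mul_lt_iff₀ hℓpos]
  nlinarith [mul_le_mul_of_nonneg_right hℓ hε.le, div_mul_cancel₀ ‖y‖ hε.ne', norm_nonneg y]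

/-- The monotone family of nonnegative large solutions `u_ℓ` converges
pointwise on `S` to a function `u` which is bounded on compact subsets of `S`, and the
convergence holds in `L^q(K)` for every compact `K ⊂ S` and every `1 ≤ q < ∞`. -/
theorem stmt9 (p : ℝ) (hp : 1 < p) (f : ℝ → ℝ)
    (hf_cont : Continuous f) (hf_mono : Monotone f) (hf_nonneg : ∀ t : ℝ, 0 ≤ f t)
    (hf_zero : ∀ t : ℝ, t ≤ 0 → f t = 0)
    (hA1 : KellerOsserman p f)
    (h1d : ∀ R : ℝ, 0 < R → ∃ φ : ℝ → ℝ, IsOneDimLargeSolution p f R φ)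
    (m k : ℕ) (hm : 1 ≤ m) (hk : 1 ≤ k)
    (ω₁ : Set (EuclideanSpace ℝ (Fin m))) (hω₁o : IsOpen ω₁)
    (hω₁b : Bornology.IsBounded ω₁) (hω₁c : Convex ℝ ω₁)
    (hω₁0 : (0 : EuclideanSpace ℝ (Fin m)) ∈ ω₁)
    (ω₂ : Set (EuclideanSpace ℝ (Fin k))) (hω₂o : IsOpen ω₂)
    (hω₂b : Bornology.IsBounded ω₂)
    (U : ℝ → EuclideanSpace ℝ (Fin m ⊕ Fin k) → ℝ)
    (hU_sol : ∀ ℓ : ℝ, 0 < ℓ → IsLargeSolution p f (cylF m k ω₁ ω₂ ℓ) (U ℓ))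
    (hU_nonneg : ∀ ℓ : ℝ, 0 < ℓ → ∀ x ∈ cylF m k ω₁ ω₂ ℓ, 0 ≤ U ℓ x)
    (hU_mono : ∀ ℓ₁ ℓ₂ : ℝ, 0 < ℓ₁ → ℓ₁ ≤ ℓ₂ →
      ∀ x ∈ cylF m k ω₁ ω₂ ℓ₁, U ℓ₂ x ≤ U ℓ₁ x) :
    ∃ u : EuclideanSpace ℝ (Fin m ⊕ Fin k) → ℝ,
      (∀ x ∈ cylS m k ω₂, Tendsto (fun ℓ : ℝ => U ℓ x) atTop (nhds (u x))) ∧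
      (∀ K : Set (EuclideanSpace ℝ (Fin m ⊕ Fin k)), IsCompact K → K ⊆ cylS m k ω₂ →
        ∃ M : ℝ, ∀ x ∈ K, |u x| ≤ M) ∧
      (∀ K : Set (EuclideanSpace ℝ (Fin m ⊕ Fin k)), IsCompact K → K ⊆ cylS m k ω₂ →
        ∀ q : ℝ, 1 ≤ q →
          Tendsto (fun ℓ : ℝ => ∫ x in K, |U ℓ x - u x| ^ q) atTop (nhds 0)) := by
  obtain ⟨ε, hε, hball⟩ := Metric.isOpen_iff.mp hω₁o 0 hω₁0
  set L : EuclideanSpace ℝ (Fin m ⊕ Fin k) → ℝ := fun x => ‖proj1Aux m k x‖ / ε + 1 with hLdef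
  have hLpos : ∀ x : EuclideanSpace ℝ (Fin m ⊕ Fin k), 0 < L x := by
    intro x; have h0 : (0:ℝ) ≤ ‖proj1Aux m k x‖ / ε := by positivity
    simp only [hLdef]; linarith
  have hmemF : ∀ x ∈ cylS m k ω₂, ∀ ℓ : ℝ, L x ≤ ℓ → x ∈ cylF m k ω₁ ω₂ ℓ := by
    intro x hx ℓ hℓ
    exact ⟨mem_smul_of_ball hε hball (proj1Aux m k x) ℓ hℓ, hx⟩
  have hmaxpos : ∀ (x : EuclideanSpace ℝ (Fin m ⊕ Fin k)) (ℓ : ℝ), 0 < max ℓ (L x) :=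
    fun x ℓ => lt_of_lt_of_le (hLpos x) (le_max_right _ _)
  have hanti : ∀ x ∈ cylS m k ω₂, Antitone (fun ℓ : ℝ => U (max ℓ (L x)) x) := by
    intro x hx ℓ₁ ℓ₂ h12
    exact hU_mono _ _ (hmaxpos x ℓ₁) (max_le_max h12 le_rfl) x
      (hmemF x hx _ (le_max_right _ _))
  have hbdd : ∀ x ∈ cylS m k ω₂, BddBelow (Set.range fun ℓ : ℝ => U (max ℓ (L x)) x) := by
    intro x hx
    refine ⟨0, ?_⟩
    rintro y ⟨ℓ, rfl⟩
    exact hU_nonneg _ (hmaxpos x ℓ) x (hmemF x hx _ (le_max_right _ _))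
  have htend : ∀ x ∈ cylS m k ω₂,
      Tendsto (fun ℓ : ℝ => U ℓ x) atTop (𝓝 (⨅ ℓ : ℝ, U (max ℓ (L x)) x)) := by
    intro x hx
    refine (tendsto_atTop_ciInf (hanti x hx) (hbdd x hx)).congr' ?_
    filter_upwards [eventually_ge_atTop (L x)] with ℓ hℓ
    rw [max_eq_left hℓ]
  have hle : ∀ x ∈ cylS m k ω₂, ∀ ℓ : ℝ, L x ≤ ℓ →
      (⨅ ℓ : ℝ, U (max ℓ (L x)) x) ≤ U ℓ x := by
    intro x hx ℓ hℓ
    have := ciInf_le (hbdd x hx) ℓ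
    rwa [max_eq_left hℓ] at this
  have hge0 : ∀ x ∈ cylS m k ω₂, 0 ≤ ⨅ ℓ : ℝ, U (max ℓ (L x)) x := by
    intro x hx
    exact le_ciInf fun ℓ =>
      hU_nonneg _ (hmaxpos x ℓ) x (hmemF x hx _ (le_max_right _ _))
  refine ⟨fun x => ⨅ ℓ : ℝ, U (max ℓ (L x)) x, htend, ?_, ?_⟩
  · -- boundedness on compacts
    intro K hK hKS
    obtain ⟨r, hr⟩ := hK.isBounded.subset_closedBall 0
    set ℓK : ℝ := max r 0 / ε + 1 with hℓKdef
    have hLK : ∀ x ∈ K, L x ≤ ℓK := by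
      intro x hx
      have h1 : ‖proj1Aux m k x‖ ≤ max r 0 :=
        le_trans (proj1Aux_norm_le m k x)
          (le_trans (mem_closedBall_zero_iff.mp (hr hx)) (le_max_left _ _))
      simp only [hℓKdef, hLdef]
      gcongr
    have hℓKpos : 0 < ℓK := by positivity
    have hKsub : K ⊆ cylF m k ω₁ ω₂ ℓK := fun x hx => hmemF x (hKS hx) ℓK (hLK x hx)
    have hcont : ContinuousOn (U ℓK) K :=
      ((hU_sol ℓK hℓKpos).1.1.continuousOn).mono hKsub
    obtain ⟨M, hM⟩ := hK.exists_bound_of_continuousOn hcont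
    refine ⟨max M 0, fun x hx => ?_⟩
    rw [abs_of_nonneg (hge0 x (hKS hx))]
    calc (⨅ ℓ : ℝ, U (max ℓ (L x)) x) ≤ U ℓK x := hle x (hKS hx) ℓK (hLK x hx)
      _ ≤ max M 0 := le_trans (le_trans (le_abs_self _)
            (by rw [← Real.norm_eq_abs]; exact hM x hx)) (le_max_left _ _)
  · -- L^q convergence
    intro K hK hKS q hq
    obtain ⟨r, hr⟩ := hK.isBounded.subset_closedBall 0
    set ℓK : ℝ := max r 0 / ε + 1 with hℓKdef
    have hLK : ∀ x ∈ K, L x ≤ ℓK := by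
      intro x hx
      have h1 : ‖proj1Aux m k x‖ ≤ max r 0 :=
        le_trans (proj1Aux_norm_le m k x)
          (le_trans (mem_closedBall_zero_iff.mp (hr hx)) (le_max_left _ _))
      simp only [hℓKdef, hLdef]
      gcongr
    have hℓKpos : 0 < ℓK := by positivity
    have hKsub : ∀ ℓ : ℝ, ℓK ≤ ℓ → K ⊆ cylF m k ω₁ ω₂ ℓ :=
      fun ℓ hℓ x hx => hmemF x (hKS hx) ℓ (le_trans (hLK x hx) hℓ)
    have hKmeas : MeasurableSet K := hK.isClosed.measurableSet
    set u : EuclideanSpace ℝ (Fin m ⊕ Fin k) → ℝ := fun x => ⨅ ℓ : ℝ, U (max ℓ (L x)) x with hudef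
    have haesmU : ∀ ℓ : ℝ, ℓK ≤ ℓ →
        AEStronglyMeasurable (U ℓ) (volume.restrict K) := by
      intro ℓ hℓ
      have hℓpos : 0 < ℓ := lt_of_lt_of_le hℓKpos hℓ
      exact (((hU_sol ℓ hℓpos).1.1.continuousOn).mono (hKsub ℓ hℓ)).aestronglyMeasurable hKmeas
    have hseq : Tendsto (fun n : ℕ => ℓK + (n : ℝ)) atTop atTop :=
      tendsto_atTop_add_const_left _ _ tendsto_natCast_atTop_atTop
    have haesmu : AEStronglyMeasurable u (volume.restrict K) := by
      refine aestronglyMeasurable_of_tendsto_ae atTop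
        (f := fun n : ℕ => U (ℓK + (n : ℝ))) (fun n => haesmU _ (by simp [Nat.cast_nonneg])) ?_
      rw [ae_restrict_iff' hKmeas]
      filter_upwards with x hx
      exact (htend x (hKS hx)).comp hseq
    have hgcont : Continuous fun t : ℝ => |t| ^ q := by
      rw [continuous_iff_continuousAt]
      intro t
      exact (Real.continuousAt_rpow_const _ q (Or.inr (by linarith))).comp
        continuous_abs.continuousAt
    have hcont : ContinuousOn (U ℓK) K :=
      ((hU_sol ℓK hℓKpos).1.1.continuousOn).mono (hKsub ℓK le_rfl)
    obtain ⟨M, hM⟩ := hK.exists_bound_of_continuousOn hcont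
    have key := MeasureTheory.tendsto_integral_filter_of_dominated_convergence
      (μ := volume.restrict K) (l := atTop)
      (F := fun (ℓ : ℝ) x => |U ℓ x - u x| ^ q) (f := fun _ => (0:ℝ))
      (bound := fun _ => max M 0 ^ q) ?_ ?_ ?_ ?_
    · simpa using key
    · filter_upwards [eventually_ge_atTop ℓK] with ℓ hℓ
      exact hgcont.comp_aestronglyMeasurable ((haesmU ℓ hℓ).sub haesmu)
    · filter_upwards [eventually_ge_atTop ℓK] with ℓ hℓ
      rw [ae_restrict_iff' hKmeas]
      filter_upwards with x hx
      have h1 : u x ≤ U ℓ x := hle x (hKS hx) ℓ (le_trans (hLK x hx) hℓ)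
      have h2 : U ℓ x ≤ U ℓK x :=
        hU_mono ℓK ℓ hℓKpos hℓ x (hKsub ℓK le_rfl hx)
      have h3 : U ℓK x ≤ max M 0 := le_trans (le_trans (le_abs_self _)
        (by rw [← Real.norm_eq_abs]; exact hM x hx)) (le_max_left _ _)
      have h4 : |U ℓ x - u x| ≤ max M 0 := by
        have h5 : 0 ≤ u x := hge0 x (hKS hx)
        rw [abs_of_nonneg (by linarith)]
        linarith
      rw [Real.norm_eq_abs, abs_of_nonneg (Real.rpow_nonneg (abs_nonneg _) q)]
      exact Real.rpow_le_rpow (abs_nonneg _) h4 (by linarith)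
    · exact integrableOn_const hK.measure_lt_top.ne
    · rw [ae_restrict_iff' hKmeas]
      filter_upwards with x hx
      have h0 : Tendsto (fun ℓ : ℝ => U ℓ x - u x) atTop (𝓝 0) := by
        rw [← sub_self (u x)]; exact (htend x (hKS hx)).sub_const (u x)
      have hc := (hgcont.continuousAt (x := (0:ℝ))).tendsto.comp h0
      simpa [Function.comp_def, abs_zero, Real.zero_rpow (by linarith : q ≠ 0)] using hc
end

section
/- Let 1 < p < ∞, let f : ℝ → [0,∞) be continuous, let a < b, and let φ : (a,b) → ℝ be differentiable such that the function ψ(t) := |φ′(t)|^{p−2}φ′(t) (interpreted as 0 where φ′(t) = 0) is differentiable on (a,b) with ψ′(t) = f(φ(t)) for every t ∈ (a,b). Then φ′ is nondecreasing on (a,b) and φ is convex on (a,b). -/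
open MeasureTheory Metric Set Filter
open scoped Topology ENNReal Pointwise

lemma stmt12_gpos (p : ℝ) (s : ℝ) (hs : 0 < s) : |s| ^ (p - 2) * s = s ^ (p - 1) := by
  rw [abs_of_pos hs, ← Real.rpow_add_one hs.ne']
  ring_nf

lemma stmt12_gmono (p : ℝ) (hp : 1 < p) : StrictMono (fun s : ℝ => |s| ^ (p - 2) * s) := by
  have hp1 : 0 < p - 1 := by linarith
  have hneg : ∀ s : ℝ, s < 0 → |s| ^ (p - 2) * s = -((-s) ^ (p - 1)) := by
    intro s hs
    have := stmt12_gpos p (-s) (by linarith)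
    rw [abs_neg] at this
    nlinarith [this]
  intro s t hst
  simp only
  rcases lt_trichotomy s 0 with hs | hs | hs
  · rcases lt_trichotomy t 0 with ht | ht | ht
    · rw [hneg s hs, hneg t ht]
      have : (-t) ^ (p - 1) < (-s) ^ (p - 1) :=
        Real.rpow_lt_rpow (by linarith) (by linarith) hp1
      linarith
    · subst ht; simp only [abs_zero, mul_zero]
      have : 0 < (-s) ^ (p - 1) := Real.rpow_pos_of_pos (by linarith) _
      rw [hneg s hs]; linarith
    · rw [hneg s hs, stmt12_gpos p t ht]
      have h1 : 0 < (-s) ^ (p - 1) := Real.rpow_pos_of_pos (by linarith) _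
      have h2 : 0 < t ^ (p - 1) := Real.rpow_pos_of_pos ht _
      linarith
  · subst hs
    have ht : 0 < t := hst
    rw [abs_zero, mul_zero, stmt12_gpos p t ht]
    exact Real.rpow_pos_of_pos ht _
  · have ht : 0 < t := hs.trans hst
    rw [stmt12_gpos p s hs, stmt12_gpos p t ht]
    exact Real.rpow_lt_rpow hs.le hst hp1

/-- If `φ` is differentiable on `(a,b)` and `t ↦ |φ'(t)|^{p-2}φ'(t)`
is differentiable with derivative `f(φ(t)) ≥ 0`, then `φ'` is nondecreasing and `φ`
is convex on `(a,b)`. -/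
theorem stmt12 (p : ℝ) (hp : 1 < p) (f : ℝ → ℝ)
    (hf_cont : Continuous f) (hf_nonneg : ∀ t : ℝ, 0 ≤ f t)
    (a b : ℝ) (hab : a < b) (φ : ℝ → ℝ)
    (hφ : ∀ t ∈ Ioo a b, DifferentiableAt ℝ φ t)
    (hode : ∀ t ∈ Ioo a b,
      HasDerivAt (fun s : ℝ => |deriv φ s| ^ (p - 2) * deriv φ s) (f (φ t)) t) :
    MonotoneOn (deriv φ) (Ioo a b) ∧ ConvexOn ℝ (Ioo a b) φ := by
  set ψ : ℝ → ℝ := fun s => |deriv φ s| ^ (p - 2) * deriv φ s with hψ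
  have hψmono : MonotoneOn ψ (Ioo a b) := by
    apply monotoneOn_of_deriv_nonneg (convex_Ioo a b)
    · exact fun t ht => ((hode t ht).differentiableAt).continuousAt.continuousWithinAt
    · rw [interior_Ioo]
      exact fun t ht => ((hode t ht).differentiableAt).differentiableWithinAt
    · rw [interior_Ioo]
      intro t ht
      rw [(hode t ht).deriv]
      exact hf_nonneg _
  have hmono : MonotoneOn (deriv φ) (Ioo a b) := by
    intro x hx y hy hxy
    exact ((stmt12_gmono p hp).le_iff_le).mp (hψmono hx hy hxy)
  refine ⟨hmono, ?_⟩
  apply MonotoneOn.convexOn_of_deriv (convex_Ioo a b)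
  · exact fun t ht => (hφ t ht).continuousAt.continuousWithinAt
  · rw [interior_Ioo]
    exact fun t ht => (hφ t ht).differentiableWithinAt
  · rwa [interior_Ioo]
end

section
/- Let 2 ≤ p < ∞. There exists a constant c > 0, depending only on p, such that for every real inner product space E and all x, y ∈ E: ‖x − y‖^p ≤ c · ⟨‖x‖^{p−2}x − ‖y‖^{p−2}y, x − y⟩. -/
open MeasureTheory Metric Set Filter
open scoped Topology ENNReal Pointwise

private lemma stmt13_key (p a b d s : ℝ) (hp : 2 ≤ p) (ha : 0 ≤ a) (hb : 0 ≤ b)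
    (hd : 0 ≤ d) (hdab : d ≤ a + b) (hds : d ^ 2 = a ^ 2 - 2 * s + b ^ 2) :
    d ^ p ≤ 2 ^ (p - 1) *
      (a ^ (p - 2) * a ^ 2 + b ^ (p - 2) * b ^ 2 - (a ^ (p - 2) + b ^ (p - 2)) * s) := by
  have h2 : (0:ℝ) ≤ p - 2 := by linarith
  have hap : 0 ≤ a ^ (p - 2) := Real.rpow_nonneg ha _
  have hbp : 0 ≤ b ^ (p - 2) := Real.rpow_nonneg hb _
  -- monotonicity term
  have hmono : 0 ≤ (a ^ (p - 2) - b ^ (p - 2)) * (a ^ 2 - b ^ 2) := by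
    rcases le_total a b with h | h
    · have h1 : a ^ (p - 2) ≤ b ^ (p - 2) := Real.rpow_le_rpow ha h h2
      have h2' : a ^ 2 ≤ b ^ 2 := by nlinarith
      nlinarith
    · have h1 : b ^ (p - 2) ≤ a ^ (p - 2) := Real.rpow_le_rpow hb h h2
      have h2' : b ^ 2 ≤ a ^ 2 := by nlinarith
      nlinarith
  -- d^(p-2) ≤ 2^(p-2) * (a^(p-2)+b^(p-2))
  have hM : 0 ≤ max a b := le_max_of_le_left ha
  have hd2 : d ^ (p - 2) ≤ 2 ^ (p - 2) * (a ^ (p - 2) + b ^ (p - 2)) := by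
    have step1 : d ^ (p - 2) ≤ (2 * max a b) ^ (p - 2) := by
      apply Real.rpow_le_rpow hd _ h2
      rcases le_total a b with h | h
      · calc d ≤ a + b := hdab
          _ ≤ b + b := by linarith
          _ = 2 * max a b := by rw [max_eq_right h]; ring
      · calc d ≤ a + b := hdab
          _ ≤ a + a := by linarith
          _ = 2 * max a b := by rw [max_eq_left h]; ring
    have step2 : (2 * max a b) ^ (p - 2) = 2 ^ (p - 2) * (max a b) ^ (p - 2) :=
      Real.mul_rpow (by norm_num) hM
    have step3 : (max a b) ^ (p - 2) ≤ a ^ (p - 2) + b ^ (p - 2) := by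
      rcases le_total a b with h | h
      · rw [max_eq_right h]; linarith
      · rw [max_eq_left h]; linarith
    have h2p : (0:ℝ) ≤ 2 ^ (p - 2) := Real.rpow_nonneg (by norm_num) _
    calc d ^ (p - 2) ≤ 2 ^ (p - 2) * (max a b) ^ (p - 2) := by rw [← step2]; exact step1
      _ ≤ 2 ^ (p - 2) * (a ^ (p - 2) + b ^ (p - 2)) := by
          exact mul_le_mul_of_nonneg_left step3 h2p
  -- d^p = d^(p-2) * d^2
  have hdp : d ^ p = d ^ (p - 2) * d ^ 2 := by
    have : d ^ p = d ^ (p - 2 + 2) := by norm_num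
    rw [this, Real.rpow_add' hd (by linarith)]
    norm_num [Real.rpow_two]
  -- 2^(p-1) = 2 * 2^(p-2)
  have h2p1 : (2:ℝ) ^ (p - 1) = 2 * 2 ^ (p - 2) := by
    rw [show p - 1 = 1 + (p - 2) by ring, Real.rpow_add (by norm_num), Real.rpow_one]
  have hI : a ^ (p - 2) * a ^ 2 + b ^ (p - 2) * b ^ 2 - (a ^ (p - 2) + b ^ (p - 2)) * s
      = (a ^ (p - 2) + b ^ (p - 2)) * d ^ 2 / 2
        + (a ^ (p - 2) - b ^ (p - 2)) * (a ^ 2 - b ^ 2) / 2 := by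
    rw [hds]; ring
  have hdsq : 0 ≤ d ^ 2 := sq_nonneg d
  have h2p : (0:ℝ) ≤ 2 ^ (p - 2) := Real.rpow_nonneg (by norm_num) _
  rw [hdp, hI, h2p1]
  nlinarith [mul_le_mul_of_nonneg_right hd2 hdsq]

/-- For `2 ≤ p < ∞` there is `c > 0` depending only on `p` such that
`‖x - y‖^p ≤ c ⟨‖x‖^{p-2}x - ‖y‖^{p-2}y, x - y⟩` in every real inner product space. -/
theorem stmt13 (p : ℝ) (hp : 2 ≤ p) :
    ∃ c : ℝ, 0 < c ∧ ∀ (E : Type*) [NormedAddCommGroup E] [InnerProductSpace ℝ E]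
      (x y : E), ‖x - y‖ ^ p ≤
        c * (inner ℝ (‖x‖ ^ (p - 2) • x - ‖y‖ ^ (p - 2) • y) (x - y) : ℝ) := by
  refine ⟨2 ^ (p - 1), Real.rpow_pos_of_pos (by norm_num) _, fun E _ _ x y => ?_⟩
  have hexp : (inner ℝ (‖x‖ ^ (p - 2) • x - ‖y‖ ^ (p - 2) • y) (x - y) : ℝ)
      = ‖x‖ ^ (p - 2) * ‖x‖ ^ 2 + ‖y‖ ^ (p - 2) * ‖y‖ ^ 2
        - (‖x‖ ^ (p - 2) + ‖y‖ ^ (p - 2)) * (inner ℝ x y : ℝ) := by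
    simp only [inner_sub_left, inner_sub_right, real_inner_smul_left]
    rw [real_inner_self_eq_norm_sq, real_inner_self_eq_norm_sq, real_inner_comm y x]
    ring
  rw [hexp]
  exact stmt13_key p ‖x‖ ‖y‖ ‖x - y‖ (inner ℝ x y) hp (norm_nonneg _) (norm_nonneg _)
    (norm_nonneg _) (norm_sub_le x y) (by rw [norm_sub_sq_real])
end

section
/- (Hölder splitting with exponent 2/p.) Let 1 < p < 2, let (X, μ) be a measure space, let a, b : X → ℝ^N be measurable, and let w : X → [0,1] be measurable. Define h : X → [0,∞] by h := (‖a‖ + ‖b‖)^{p−2}‖a − b‖², with the convention h = 0 at points where a = b = 0. Then ∫_X ‖a − b‖^p · w dμ ≤ (∫_X h · w^{2/p} dμ)^{p/2} · (∫_X (‖a‖ + ‖b‖)^p dμ)^{(2−p)/2}. -/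
open MeasureTheory Metric Set Filter
open scoped Topology ENNReal Pointwise

/-- **Hölder splitting with exponent `2/p`.** For `1 < p < 2`, measurable
`a, b : X → ℝ^N` and measurable `w : X → [0,1]`:
`∫ ‖a-b‖^p w ≤ (∫ h w^{2/p})^{p/2} (∫ (‖a‖+‖b‖)^p)^{(2-p)/2}` where
`h = (‖a‖+‖b‖)^{p-2}‖a-b‖²` (which is `0` where `a = b = 0` by the `rpow` convention). -/
theorem stmt15 (p : ℝ) (hp1 : 1 < p) (hp2 : p < 2) (N : ℕ)
    (X : Type*) [MeasurableSpace X] (μ : Measure X)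
    (a b : X → EuclideanSpace ℝ (Fin N)) (ha : Measurable a) (hb : Measurable b)
    (w : X → ℝ) (hw : Measurable w) (hw0 : ∀ x, 0 ≤ w x) (hw1 : ∀ x, w x ≤ 1) :
    (∫⁻ x, ENNReal.ofReal (‖a x - b x‖ ^ p * w x) ∂μ) ≤
      (∫⁻ x, ENNReal.ofReal
          ((‖a x‖ + ‖b x‖) ^ (p - 2) * ‖a x - b x‖ ^ (2:ℝ) * w x ^ (2 / p)) ∂μ) ^ (p / 2) *
        (∫⁻ x, ENNReal.ofReal ((‖a x‖ + ‖b x‖) ^ p) ∂μ) ^ ((2 - p) / 2) := by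
  have hp0 : 0 < p := by linarith
  have h2p : 0 < 2 - p := by linarith
  have hconj : (2 / p).HolderConjugate (2 / (2 - p)) := by
    constructor
    · rw [inv_div, inv_div, inv_one]; linarith
    · positivity
    · positivity
  set F : X → ℝ≥0∞ := fun x => (ENNReal.ofReal
      ((‖a x‖ + ‖b x‖) ^ (p - 2) * ‖a x - b x‖ ^ (2:ℝ) * w x ^ (2 / p))) ^ (p / 2) with hF
  set G : X → ℝ≥0∞ := fun x => (ENNReal.ofReal ((‖a x‖ + ‖b x‖) ^ p)) ^ ((2 - p) / 2) with hG
  have hmF : Measurable F := by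
    apply Measurable.pow_const
    apply ENNReal.measurable_ofReal.comp
    fun_prop
  have hmG : Measurable G := by
    apply Measurable.pow_const
    apply ENNReal.measurable_ofReal.comp
    fun_prop
  have key := ENNReal.lintegral_mul_le_Lp_mul_Lq μ hconj hmF.aemeasurable hmG.aemeasurable
  have hFe : ∀ x, F x ^ (2 / p) = ENNReal.ofReal
      ((‖a x‖ + ‖b x‖) ^ (p - 2) * ‖a x - b x‖ ^ (2:ℝ) * w x ^ (2 / p)) := by
    intro x
    rw [hF, ← ENNReal.rpow_mul]
    rw [show p / 2 * (2 / p) = 1 by field_simp, ENNReal.rpow_one]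
  have hGe : ∀ x, G x ^ (2 / (2 - p)) = ENNReal.ofReal ((‖a x‖ + ‖b x‖) ^ p) := by
    intro x
    rw [hG, ← ENNReal.rpow_mul]
    rw [show (2 - p) / 2 * (2 / (2 - p)) = 1 by field_simp, ENNReal.rpow_one]
  have hreal : ∀ (s d v : ℝ), 0 ≤ s → 0 ≤ d → 0 ≤ v → (s = 0 → d = 0) →
      d ^ p * v = (s ^ (p-2) * d ^ (2:ℝ) * v ^ (2/p)) ^ (p/2) * (s ^ p) ^ ((2-p)/2) := by
    intro s d v hs0 hd0 hv0 hz
    rcases eq_or_lt_of_le hs0 with hse | hsp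
    · have hdz : d = 0 := hz hse.symm
      rw [hdz, ← hse]
      simp [Real.zero_rpow hp0.ne', Real.zero_rpow (by norm_num : (2:ℝ) ≠ 0),
        Real.zero_rpow (show ((2:ℝ)-p)/2 ≠ 0 by positivity),
        Real.zero_rpow (show p/2 ≠ 0 by positivity)]
    · rw [Real.mul_rpow (by positivity) (by positivity),
        Real.mul_rpow (by positivity) (by positivity),
        ← Real.rpow_mul hs0, ← Real.rpow_mul hd0, ← Real.rpow_mul hv0, ← Real.rpow_mul hs0,
        show (2:ℝ) * (p/2) = p by ring, show (2/p) * (p/2) = 1 by field_simp,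
        Real.rpow_one]
      have hcomb : s ^ ((p-2)*(p/2)) * s ^ (p*((2-p)/2)) = 1 := by
        rw [← Real.rpow_add hsp, show (p-2)*(p/2) + p*((2-p)/2) = 0 by ring, Real.rpow_zero]
      calc d ^ p * v = (s ^ ((p-2)*(p/2)) * s ^ (p*((2-p)/2))) * (d ^ p * v) := by
            rw [hcomb, one_mul]
        _ = s ^ ((p-2)*(p/2)) * d ^ p * v * s ^ (p*((2-p)/2)) := by ring
  have hFG : ∀ x, ENNReal.ofReal (‖a x - b x‖ ^ p * w x) = F x * G x := by
    intro x
    rw [hF, hG]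
    dsimp only
    have hb1 : 0 ≤ (‖a x‖ + ‖b x‖) ^ (p - 2) * ‖a x - b x‖ ^ (2:ℝ) * w x ^ (2/p) :=
      mul_nonneg (mul_nonneg (Real.rpow_nonneg (by positivity) _)
        (Real.rpow_nonneg (norm_nonneg _) _)) (Real.rpow_nonneg (hw0 x) _)
    rw [ENNReal.ofReal_rpow_of_nonneg hb1 (by linarith : (0:ℝ) ≤ p/2),
        ENNReal.ofReal_rpow_of_nonneg (by positivity) (by linarith : (0:ℝ) ≤ (2-p)/2),
        ← ENNReal.ofReal_mul (Real.rpow_nonneg hb1 _)]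
    refine congrArg ENNReal.ofReal
      (hreal _ _ _ (by positivity) (norm_nonneg _) (hw0 x) ?_)
    intro hsz
    have hax : a x = 0 := by
      have h1 : ‖a x‖ = 0 := by
        have := norm_nonneg (a x); have := norm_nonneg (b x); linarith
      exact norm_eq_zero.mp h1
    have hbx : b x = 0 := by
      have h1 : ‖b x‖ = 0 := by
        have := norm_nonneg (a x); have := norm_nonneg (b x); linarith
      exact norm_eq_zero.mp h1
    simp [hax, hbx]
  calc (∫⁻ x, ENNReal.ofReal (‖a x - b x‖ ^ p * w x) ∂μ)
      = ∫⁻ x, F x * G x ∂μ := by simp_rw [hFG]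
    _ ≤ (∫⁻ x, F x ^ (2/p) ∂μ) ^ (1/(2/p)) * (∫⁻ x, G x ^ (2/(2-p)) ∂μ) ^ (1/(2/(2-p))) := key
    _ = _ := by
        simp_rw [hFe, hGe, one_div, ← one_div]
        rw [one_div_div, one_div_div]
end
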